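/- arXiv:1605.01586 — 2 statements merged into one kernel-verified Lean document; each statement's English description precedes it below -/
import Mathlib

section
/- For any cwf C, define Pr^∧(Γ) to be the set of finite sequences ⟨A1,...,An⟩ of types in Ty(Γ), ordered by ⟨A1,...,An⟩ ≤ ⟨B1,...,Bm⟩ iff for each k, Tm(Γ.A1.A2{p}.....An{p^{(n−1)}}, B_k{p^{(n)}}) is inhabited; with top element the empty sequence and meet given by concatenation. Then Pr^∧(Γ) is a meet-semilattice (a preorder with greatest element and binary infima), the substitution ⟨A1,...,An⟩{f} = ⟨A1{f},...,An{f}⟩ is a monotone semilattice morphism, and Pr^∧ is functorial in Γ, making (C, Pr^∧) a cwf with Horn doctrine. -/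
/-- A category with families (cwf). -/
structure CwF where
  Ob : Type
  Hom : Ob → Ob → Type
  id : (Γ : Ob) → Hom Γ Γ
  comp : {Γ Δ Θ : Ob} → Hom Δ Θ → Hom Γ Δ → Hom Γ Θ
  id_comp : ∀ {Γ Δ} (f : Hom Γ Δ), comp (id Δ) f = f
  comp_id : ∀ {Γ Δ} (f : Hom Γ Δ), comp f (id Γ) = f
  assoc : ∀ {Γ Δ Θ Ξ} (h : Hom Θ Ξ) (g : Hom Δ Θ) (f : Hom Γ Δ),
    comp (comp h g) f = comp h (comp g f)
  unit : Ob
  eps : (Γ : Ob) → Hom Γ unit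
  eps_unique : ∀ {Γ} (f : Hom Γ unit), f = eps Γ
  Ty : Ob → Type
  tySub : {Γ Δ : Ob} → Ty Γ → Hom Δ Γ → Ty Δ
  tySub_id : ∀ {Γ} (A : Ty Γ), tySub A (id Γ) = A
  tySub_comp : ∀ {Γ Δ Θ} (A : Ty Γ) (f : Hom Δ Γ) (g : Hom Θ Δ),
    tySub A (comp f g) = tySub (tySub A f) g
  Tm : (Γ : Ob) → Ty Γ → Type
  tmSub : {Γ Δ : Ob} → {A : Ty Γ} → Tm Γ A → (f : Hom Δ Γ) → Tm Δ (tySub A f)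
  tmSub_id : ∀ {Γ} {A : Ty Γ} (a : Tm Γ A), HEq (tmSub a (id Γ)) a
  tmSub_comp : ∀ {Γ Δ Θ} {A : Ty Γ} (a : Tm Γ A) (f : Hom Δ Γ) (g : Hom Θ Δ),
    HEq (tmSub a (comp f g)) (tmSub (tmSub a f) g)
  ext : (Γ : Ob) → Ty Γ → Ob
  p : {Γ : Ob} → (A : Ty Γ) → Hom (ext Γ A) Γ
  v : {Γ : Ob} → (A : Ty Γ) → Tm (ext Γ A) (tySub A (p A))
  pair : {Γ Δ : Ob} → (A : Ty Γ) → (f : Hom Δ Γ) → Tm Δ (tySub A f) → Hom Δ (ext Γ A)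
  p_pair : ∀ {Γ Δ} (A : Ty Γ) (f : Hom Δ Γ) (a : Tm Δ (tySub A f)),
    comp (p A) (pair A f a) = f
  v_pair : ∀ {Γ Δ} (A : Ty Γ) (f : Hom Δ Γ) (a : Tm Δ (tySub A f)),
    HEq (tmSub (v A) (pair A f a)) a
  pair_eta : ∀ {Γ Δ} (A : Ty Γ) (h : Hom Δ (ext Γ A)) (a : Tm Δ (tySub A (comp (p A) h))),
    HEq a (tmSub (v A) h) → pair A (comp (p A) h) a = h
  pair_comp : ∀ {Γ Δ Θ} (A : Ty Γ) (f : Hom Δ Γ) (a : Tm Δ (tySub A f)) (g : Hom Θ Δ)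
    (a' : Tm Θ (tySub A (comp f g))), HEq a' (tmSub a g) →
    comp (pair A f a) g = pair A (comp f g) a'

namespace CwF

/-- The section ⟨1, M⟩ : Γ → Γ.A determined by a term M. -/
def sec (C : CwF) {Γ : C.Ob} {A : C.Ty Γ} (M : C.Tm Γ A) : C.Hom Γ (C.ext Γ A) :=
  C.pair A (C.id Γ) (cast (congrArg (C.Tm Γ) (C.tySub_id A).symm) M)

/-- The canonical morphism q(f,S) = f.S : Δ.S{f} → Γ.S. -/
def q (C : CwF) {Γ Δ : C.Ob} (f : C.Hom Δ Γ) (S : C.Ty Γ) :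
    C.Hom (C.ext Δ (C.tySub S f)) (C.ext Γ S) :=
  C.pair S (C.comp f (C.p (C.tySub S f)))
    (cast (congrArg (C.Tm _) (C.tySub_comp S f (C.p (C.tySub S f))).symm)
      (C.v (C.tySub S f)))

/-- The propositions-as-types preorder on types: A ≤ B iff Tm(Γ.A, B{p(A)}) is inhabited. -/
def le (C : CwF) {Γ : C.Ob} (A B : C.Ty Γ) : Prop :=
  Nonempty (C.Tm (C.ext Γ A) (C.tySub B (C.p A)))

end CwF

namespace CwF

/-- Iterated context extension by a list of types over Γ, together with the
iterated projection back to Γ: Γ.A₁.A₂{p}.….Aₙ{p^{(n−1)}}. -/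
def extGo (C : CwF) {Γ : C.Ob} : (X : C.Ob) → C.Hom X Γ → List (C.Ty Γ) → (Y : C.Ob) × C.Hom Y Γ
  | X, g, [] => ⟨X, g⟩
  | X, g, A :: L => C.extGo (C.ext X (C.tySub A g)) (C.comp g (C.p (C.tySub A g))) L

/-- The object Γ.A₁.A₂{p}.….Aₙ{p^{(n−1)}}. -/
def extList (C : CwF) {Γ : C.Ob} (L : List (C.Ty Γ)) : C.Ob :=
  (C.extGo Γ (C.id Γ) L).1

/-- The iterated projection p^{(n)} : Γ.A₁.….Aₙ{p^{(n−1)}} → Γ. -/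
def pList (C : CwF) {Γ : C.Ob} (L : List (C.Ty Γ)) : C.Hom (C.extList L) Γ :=
  (C.extGo Γ (C.id Γ) L).2

/-- The Horn-doctrine order on finite sequences of types:
⟨A₁,…,Aₙ⟩ ≤ ⟨B₁,…,Bₘ⟩ iff each Tm(Γ.A₁.….Aₙ{p^{(n−1)}}, B_k{p^{(n)}}) is inhabited. -/
def leL (C : CwF) {Γ : C.Ob} (L M : List (C.Ty Γ)) : Prop :=
  ∀ B ∈ M, Nonempty (C.Tm (C.extList L) (C.tySub B (C.pList L)))

end CwF

/-!
Write `Γ.L` for `extList L` and `p^L` for `pList L`. The iterated extension has a pairing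
property: `g : X ⟶ Γ` lifts along `p^L` once every `A ∈ L` has a term of type `A{g}` over `X`,
and every `A ∈ L` has a term of type `A{p^L}` over `Γ.L`. So `L ≤ M` makes `p^L` lift along
`p^M`, and transporting terms along that lift gives transitivity. Reflexivity and the lower bounds
`L ++ M ≤ L, M` are the second half of pairing. For monotonicity of substitution along `f`,
transport along the lift of `f ∘ p^{L{f}}` along `p^L`.
-/

namespace CwF

variable {C : CwF}

lemma nonempty_tm_tySub_of_comp_eq {X Y Z : C.Ob} {g : C.Hom Y Z} {g' : C.Hom X Z}
    (h : C.Hom X Y) (hg : C.comp g h = g') {B : C.Ty Z} :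
    Nonempty (C.Tm Y (C.tySub B g)) → Nonempty (C.Tm X (C.tySub B g')) :=
  fun ⟨t⟩ => ⟨cast (by rw [← hg, C.tySub_comp]) (C.tmSub t h)⟩

lemma exists_comp_eq_extGo {Γ : C.Ob} (L : List (C.Ty Γ)) (X : C.Ob) (g : C.Hom X Γ) :
    ∃ w : C.Hom (C.extGo X g L).1 X, C.comp g w = (C.extGo X g L).2 := by
  induction L generalizing X g with
  | nil => exact ⟨C.id X, C.comp_id g⟩
  | cons A L ih =>
    obtain ⟨w, hw⟩ := ih (C.ext X (C.tySub A g)) (C.comp g (C.p (C.tySub A g)))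
    exact ⟨C.comp (C.p (C.tySub A g)) w, (C.assoc _ _ _).symm.trans hw⟩

lemma nonempty_tm_extGo_of_mem {Γ : C.Ob} {L : List (C.Ty Γ)} {A : C.Ty Γ} (hA : A ∈ L)
    (X : C.Ob) (g : C.Hom X Γ) :
    Nonempty (C.Tm (C.extGo X g L).1 (C.tySub A (C.extGo X g L).2)) := by
  induction L generalizing X g with
  | nil => cases hA
  | cons B L ih =>
    rcases List.mem_cons.mp hA with rfl | hA
    · obtain ⟨w, hw⟩ := exists_comp_eq_extGo L _ (C.comp g (C.p (C.tySub A g)))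
      exact nonempty_tm_tySub_of_comp_eq w hw
        ⟨cast (by rw [C.tySub_comp]) (C.v (C.tySub A g))⟩
    · exact ih hA _ _

lemma exists_lift_extGo {Γ Y X : C.Ob} (M : List (C.Ty Γ)) (h₀ : C.Hom Y Γ) (g : C.Hom X Γ)
    (k : C.Hom X Y) (hk : C.comp h₀ k = g) (hM : ∀ B ∈ M, Nonempty (C.Tm X (C.tySub B g))) :
    ∃ h : C.Hom X (C.extGo Y h₀ M).1, C.comp (C.extGo Y h₀ M).2 h = g := by
  induction M generalizing Y h₀ k with
  | nil => exact ⟨k, hk⟩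
  | cons B M ih =>
    obtain ⟨t⟩ := hM B List.mem_cons_self
    refine ih _ (C.pair (C.tySub B h₀) k (cast (by rw [← C.tySub_comp, hk]) t)) ?_
      (fun B' hB' => hM B' (List.mem_cons_of_mem _ hB'))
    rw [C.assoc, C.p_pair, hk]

lemma nonempty_tm_extList_of_mem {Γ : C.Ob} {L : List (C.Ty Γ)} {A : C.Ty Γ} (hA : A ∈ L) :
    Nonempty (C.Tm (C.extList L) (C.tySub A (C.pList L))) :=
  nonempty_tm_extGo_of_mem hA Γ (C.id Γ)

lemma exists_lift_pList {Γ X : C.Ob} {M : List (C.Ty Γ)} {g : C.Hom X Γ}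
    (hM : ∀ B ∈ M, Nonempty (C.Tm X (C.tySub B g))) :
    ∃ h : C.Hom X (C.extList M), C.comp (C.pList M) h = g :=
  exists_lift_extGo M (C.id Γ) g g (C.id_comp g) hM

lemma leL_of_subset {Γ : C.Ob} {L M : List (C.Ty Γ)} (h : M ⊆ L) : C.leL L M :=
  fun _ hB => nonempty_tm_extList_of_mem (h hB)

lemma leL_trans {Γ : C.Ob} {L M N : List (C.Ty Γ)} (hLM : C.leL L M) (hMN : C.leL M N) :
    C.leL L N := by
  obtain ⟨h, hh⟩ := exists_lift_pList hLM
  exact fun B hB => nonempty_tm_tySub_of_comp_eq h hh (hMN B hB)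

lemma leL_append_iff {Γ : C.Ob} {P L M : List (C.Ty Γ)} :
    C.leL P (L ++ M) ↔ C.leL P L ∧ C.leL P M :=
  List.forall_mem_append

lemma leL_map_tySub {Γ Δ : C.Ob} (f : C.Hom Δ Γ) {L M : List (C.Ty Γ)} (hLM : C.leL L M) :
    C.leL (L.map (C.tySub · f)) (M.map (C.tySub · f)) := by
  have hL : ∀ A ∈ L,
      Nonempty (C.Tm (C.extList (L.map (C.tySub · f)))
        (C.tySub A (C.comp f (C.pList (L.map (C.tySub · f)))))) := fun A hA => by
    rw [C.tySub_comp]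
    exact nonempty_tm_extList_of_mem (List.mem_map_of_mem hA)
  obtain ⟨h, hh⟩ := exists_lift_pList hL
  intro B' hB'
  obtain ⟨B, hB, rfl⟩ := List.mem_map.mp hB'
  rw [← C.tySub_comp]
  exact nonempty_tm_tySub_of_comp_eq h hh (hLM B hB)

end CwF

/-- For any cwf C, the finite sequences of types in Ty(Γ) with the order above form a
meet-semilattice preorder with top the empty sequence and meet given by concatenation;
componentwise substitution is a monotone semilattice morphism, functorially in Γ.
Hence (C, Pr^∧) is a cwf with Horn doctrine. -/
theorem horn_doctrine (C : CwF) :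
    (∀ (Γ : C.Ob) (L : List (C.Ty Γ)), C.leL L L) ∧
    (∀ (Γ : C.Ob) (L M N : List (C.Ty Γ)), C.leL L M → C.leL M N → C.leL L N) ∧
    (∀ (Γ : C.Ob) (L : List (C.Ty Γ)), C.leL L []) ∧
    (∀ (Γ : C.Ob) (P L M : List (C.Ty Γ)), C.leL P (L ++ M) ↔ C.leL P L ∧ C.leL P M) ∧
    (∀ (Γ : C.Ob) (L M : List (C.Ty Γ)), C.leL (L ++ M) L ∧ C.leL (L ++ M) M) ∧
    (∀ {Γ Δ : C.Ob} (f : C.Hom Δ Γ) (L M : List (C.Ty Γ)),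
      C.leL L M → C.leL (L.map (fun A => C.tySub A f)) (M.map (fun A => C.tySub A f))) ∧
    (∀ {Γ Δ : C.Ob} (f : C.Hom Δ Γ) (L M : List (C.Ty Γ)),
      (L ++ M).map (fun A => C.tySub A f)
        = L.map (fun A => C.tySub A f) ++ M.map (fun A => C.tySub A f)) ∧
    (∀ (Γ : C.Ob) (L : List (C.Ty Γ)), L.map (fun A => C.tySub A (C.id Γ)) = L) ∧
    (∀ {Γ Δ Θ : C.Ob} (f : C.Hom Δ Γ) (g : C.Hom Θ Δ) (L : List (C.Ty Γ)),
      L.map (fun A => C.tySub A (C.comp f g))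
        = (L.map (fun A => C.tySub A f)).map (fun A => C.tySub A g)) := by
  refine ⟨fun _ _ => CwF.leL_of_subset (List.Subset.refl _),
    fun _ _ _ _ => CwF.leL_trans,
    fun _ _ => CwF.leL_of_subset (List.nil_subset _),
    fun _ _ _ _ => CwF.leL_append_iff,
    fun _ L M => ⟨CwF.leL_of_subset (List.subset_append_left L M),
      CwF.leL_of_subset (List.subset_append_right L M)⟩,
    fun f _ _ => CwF.leL_map_tySub f,
    fun _ _ _ => List.map_append,
    fun _ L => by simp only [C.tySub_id, List.map_id'],
    fun _ _ L => by simp only [C.tySub_comp, List.map_map, Function.comp_def]⟩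
end

section
/- If a cwf C supports the type constructions Σ, Π, +, N0 and N1, then the propositions-as-types assignment Pr_C(Γ) = (Ty(Γ), ≤), with A ≤ B iff Tm(Γ.A, B{p(A)}) is inhabited, ⊤ = N1, ⊥ = N0, ∧ = ×, ∨ = +, → = function type, ∀_S = Π(S,−), ∃_S = Σ(S,−), makes (C, Pr_C) a cwf with first-order hyperdoctrine: each Pr_C(Γ) is a Heyting prealgebra, substitution gives Heyting morphisms functorially, the quantifiers are monotone and adjoint to weakening (Q ≤ ∀_S(R) ⟺ Q{p(S)} ≤ R and ∃_S(R) ≤ Q ⟺ R ≤ Q{p(S)}), and Beck–Chevalley holds: ∀_S(R){f} = ∀_{S{f}}(R{f.S}) and ∃_S(R){f} = ∃_{S{f}}(R{f.S}). -/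
/-- The cwf C supports Π-types. -/
structure PiSupport (C : CwF) where
  Pi : {Γ : C.Ob} → (A : C.Ty Γ) → C.Ty (C.ext Γ A) → C.Ty Γ
  lam : {Γ : C.Ob} → {A : C.Ty Γ} → {B : C.Ty (C.ext Γ A)} →
    C.Tm (C.ext Γ A) B → C.Tm Γ (Pi A B)
  app : {Γ : C.Ob} → {A : C.Ty Γ} → {B : C.Ty (C.ext Γ A)} →
    C.Tm Γ (Pi A B) → (N : C.Tm Γ A) → C.Tm Γ (C.tySub B (C.sec N))
  beta : ∀ {Γ : C.Ob} {A : C.Ty Γ} {B : C.Ty (C.ext Γ A)}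
    (P : C.Tm (C.ext Γ A) B) (N : C.Tm Γ A),
    app (lam P) N = C.tmSub P (C.sec N)
  Pi_sub : ∀ {Γ Δ : C.Ob} (A : C.Ty Γ) (B : C.Ty (C.ext Γ A)) (f : C.Hom Δ Γ),
    C.tySub (Pi A B) f = Pi (C.tySub A f) (C.tySub B (C.q f A))
  lam_sub : ∀ {Γ Δ : C.Ob} {A : C.Ty Γ} {B : C.Ty (C.ext Γ A)}
    (P : C.Tm (C.ext Γ A) B) (f : C.Hom Δ Γ),
    HEq (C.tmSub (lam P) f) (lam (C.tmSub P (C.q f A)))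
  app_sub : ∀ {Γ Δ : C.Ob} {A : C.Ty Γ} {B : C.Ty (C.ext Γ A)}
    (M : C.Tm Γ (Pi A B)) (N : C.Tm Γ A) (f : C.Hom Δ Γ)
    (M' : C.Tm Δ (Pi (C.tySub A f) (C.tySub B (C.q f A)))) (N' : C.Tm Δ (C.tySub A f)),
    HEq M' (C.tmSub M f) → HEq N' (C.tmSub N f) →
    HEq (C.tmSub (app M N) f) (app M' N')

/-- The cwf C supports Σ-types. -/
structure SigmaSupport (C : CwF) where
  Sg : {Γ : C.Ob} → (A : C.Ty Γ) → C.Ty (C.ext Γ A) → C.Ty Γ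
  Sg_sub : ∀ {Γ Δ : C.Ob} (A : C.Ty Γ) (B : C.Ty (C.ext Γ A)) (f : C.Hom Δ Γ),
    C.tySub (Sg A B) f = Sg (C.tySub A f) (C.tySub B (C.q f A))
  pr : {Γ : C.Ob} → {A : C.Ty Γ} → {B : C.Ty (C.ext Γ A)} →
    (M : C.Tm Γ A) → C.Tm Γ (C.tySub B (C.sec M)) → C.Tm Γ (Sg A B)
  pr_sub : ∀ {Γ Δ : C.Ob} {A : C.Ty Γ} {B : C.Ty (C.ext Γ A)}
    (M : C.Tm Γ A) (N : C.Tm Γ (C.tySub B (C.sec M))) (f : C.Hom Δ Γ)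
    (M' : C.Tm Δ (C.tySub A f)) (N' : C.Tm Δ (C.tySub (C.tySub B (C.q f A)) (C.sec M'))),
    HEq M' (C.tmSub M f) → HEq N' (C.tmSub N f) →
    HEq (C.tmSub (pr M N) f) (pr M' N')
  /-- The pairing substitution pair_{A,B} : Γ.A.B → Γ.Σ(A,B). -/
  pairMor : {Γ : C.Ob} → (A : C.Ty Γ) → (B : C.Ty (C.ext Γ A)) →
    C.Hom (C.ext (C.ext Γ A) B) (C.ext Γ (Sg A B))
  p_pairMor : ∀ {Γ : C.Ob} (A : C.Ty Γ) (B : C.Ty (C.ext Γ A)),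
    C.comp (C.p (Sg A B)) (pairMor A B) = C.comp (C.p A) (C.p B)
  v_pairMor : ∀ {Γ : C.Ob} (A : C.Ty Γ) (B : C.Ty (C.ext Γ A))
    (M' : C.Tm (C.ext (C.ext Γ A) B) (C.tySub A (C.comp (C.p A) (C.p B))))
    (N' : C.Tm (C.ext (C.ext Γ A) B) (C.tySub (C.tySub B (C.q (C.comp (C.p A) (C.p B)) A)) (C.sec M'))),
    HEq M' (C.tmSub (C.v A) (C.p B)) → HEq N' (C.v B) →
    HEq (C.tmSub (C.v (Sg A B)) (pairMor A B)) (pr M' N')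
  elim : {Γ : C.Ob} → {A : C.Ty Γ} → {B : C.Ty (C.ext Γ A)} →
    (Cty : C.Ty (C.ext Γ (Sg A B))) → (P : C.Tm Γ (Sg A B)) →
    (K : C.Tm (C.ext (C.ext Γ A) B) (C.tySub Cty (pairMor A B))) →
    C.Tm Γ (C.tySub Cty (C.sec P))
  elim_conv : ∀ {Γ : C.Ob} {A : C.Ty Γ} {B : C.Ty (C.ext Γ A)}
    (Cty : C.Ty (C.ext Γ (Sg A B))) (M : C.Tm Γ A) (N : C.Tm Γ (C.tySub B (C.sec M)))
    (K : C.Tm (C.ext (C.ext Γ A) B) (C.tySub Cty (pairMor A B))),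
    HEq (elim Cty (pr M N) K) (C.tmSub K (C.pair B (C.sec M) N))

/-- The cwf C supports +-types. -/
structure PlusSupport (C : CwF) where
  plus : {Γ : C.Ob} → C.Ty Γ → C.Ty Γ → C.Ty Γ
  plus_sub : ∀ {Γ Δ : C.Ob} (A B : C.Ty Γ) (f : C.Hom Δ Γ),
    C.tySub (plus A B) f = plus (C.tySub A f) (C.tySub B f)
  inl : {Γ : C.Ob} → {A B : C.Ty Γ} → C.Tm Γ A → C.Tm Γ (plus A B)
  inr : {Γ : C.Ob} → {A B : C.Ty Γ} → C.Tm Γ B → C.Tm Γ (plus A B)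
  inl_sub : ∀ {Γ Δ : C.Ob} {A B : C.Ty Γ} (M : C.Tm Γ A) (f : C.Hom Δ Γ),
    HEq (C.tmSub (inl (B := B) M) f) (inl (B := C.tySub B f) (C.tmSub M f))
  inr_sub : ∀ {Γ Δ : C.Ob} {A B : C.Ty Γ} (N : C.Tm Γ B) (f : C.Hom Δ Γ),
    HEq (C.tmSub (inr (A := A) N) f) (inr (A := C.tySub A f) (C.tmSub N f))
  elim : {Γ : C.Ob} → {A B : C.Ty Γ} → (Cty : C.Ty (C.ext Γ (plus A B))) →
    (P : C.Tm Γ (plus A B)) →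
    (K1 : C.Tm (C.ext Γ A) (C.tySub Cty (C.pair (plus A B) (C.p A)
      (cast (congrArg (C.Tm _) (plus_sub A B (C.p A)).symm) (inl (C.v A)))))) →
    (K2 : C.Tm (C.ext Γ B) (C.tySub Cty (C.pair (plus A B) (C.p B)
      (cast (congrArg (C.Tm _) (plus_sub A B (C.p B)).symm) (inr (C.v B)))))) →
    C.Tm Γ (C.tySub Cty (C.sec P))
  elim_inl : ∀ {Γ : C.Ob} {A B : C.Ty Γ} (Cty : C.Ty (C.ext Γ (plus A B)))
    (M : C.Tm Γ A) K1 K2,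
    HEq (elim Cty (inl M) K1 K2) (C.tmSub K1 (C.sec M))
  elim_inr : ∀ {Γ : C.Ob} {A B : C.Ty Γ} (Cty : C.Ty (C.ext Γ (plus A B)))
    (N : C.Tm Γ B) K1 K2,
    HEq (elim Cty (inr N) K1 K2) (C.tmSub K2 (C.sec N))

/-- The cwf C supports N₀-types (the empty type). -/
structure N0Support (C : CwF) where
  N0 : (Γ : C.Ob) → C.Ty Γ
  N0_sub : ∀ {Γ Δ : C.Ob} (f : C.Hom Δ Γ), C.tySub (N0 Γ) f = N0 Δ
  elim : {Γ : C.Ob} → (Cty : C.Ty (C.ext Γ (N0 Γ))) → (P : C.Tm Γ (N0 Γ)) →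
    C.Tm Γ (C.tySub Cty (C.sec P))

/-- The cwf C supports N₁-types (the unit type). -/
structure N1Support (C : CwF) where
  N1 : (Γ : C.Ob) → C.Ty Γ
  N1_sub : ∀ {Γ Δ : C.Ob} (f : C.Hom Δ Γ), C.tySub (N1 Γ) f = N1 Δ
  star : (Γ : C.Ob) → C.Tm Γ (N1 Γ)
  star_sub : ∀ {Γ Δ : C.Ob} (f : C.Hom Δ Γ), HEq (C.tmSub (star Γ) f) (star Δ)
  elim : {Γ : C.Ob} → (Cty : C.Ty (C.ext Γ (N1 Γ))) → (P : C.Tm Γ (N1 Γ)) →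
    (M : C.Tm Γ (C.tySub Cty (C.sec (star Γ)))) → C.Tm Γ (C.tySub Cty (C.sec P))
  elim_conv : ∀ {Γ : C.Ob} (Cty : C.Ty (C.ext Γ (N1 Γ)))
    (M : C.Tm Γ (C.tySub Cty (C.sec (star Γ)))),
    elim Cty (star Γ) M = M

/-- Binary product A×B = Σ(A, B{p(A)}). -/
def SigmaSupport.prod {C : CwF} (S : SigmaSupport C) {Γ : C.Ob} (A B : C.Ty Γ) : C.Ty Γ :=
  S.Sg A (C.tySub B (C.p A))

/-- Function type A→B = Π(A, B{p(A)}). -/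
def PiSupport.arrow {C : CwF} (P : PiSupport C) {Γ : C.Ob} (A B : C.Ty Γ) : C.Ty Γ :=
  P.Pi A (C.tySub B (C.p A))

namespace CwF

variable {C : CwF}

/-- Cast a term along an equality of types. -/
def castT {Γ : C.Ob} {A B : C.Ty Γ} (e : A = B) (a : C.Tm Γ A) : C.Tm Γ B :=
  cast (congrArg (C.Tm Γ) e) a

theorem castT_heq {Γ : C.Ob} {A B : C.Ty Γ} (e : A = B) (a : C.Tm Γ A) :
    HEq (castT e a) a := cast_heq _ _

theorem p_sec {Γ : C.Ob} {A : C.Ty Γ} (M : C.Tm Γ A) :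
    C.comp (C.p A) (C.sec M) = C.id Γ := C.p_pair _ _ _

theorem p_q {Γ Δ : C.Ob} (f : C.Hom Δ Γ) (S : C.Ty Γ) :
    C.comp (C.p S) (C.q f S) = C.comp f (C.p (C.tySub S f)) := C.p_pair _ _ _

theorem tmSub_congr {Γ Δ : C.Ob} {A A' : C.Ty Γ} (e : A = A')
    {a : C.Tm Γ A} {a' : C.Tm Γ A'} (h : HEq a a') {f f' : C.Hom Δ Γ} (hf : f = f') :
    HEq (C.tmSub a f) (C.tmSub a' f') := by
  subst e; subst hf; cases h; rfl

theorem pair_congr {Γ Δ : C.Ob} (A : C.Ty Γ) {f f' : C.Hom Δ Γ} (hf : f = f')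
    {a : C.Tm Δ (C.tySub A f)} {a' : C.Tm Δ (C.tySub A f')} (ha : HEq a a') :
    C.pair A f a = C.pair A f' a' := by subst hf; cases ha; rfl

theorem hom_ext {Γ Δ : C.Ob} {A : C.Ty Γ} {h1 h2 : C.Hom Δ (C.ext Γ A)}
    (e : C.comp (C.p A) h1 = C.comp (C.p A) h2)
    (ht : HEq (C.tmSub (C.v A) h1) (C.tmSub (C.v A) h2)) : h1 = h2 := by
  have e1 : C.pair A (C.comp (C.p A) h1)
      (castT (C.tySub_comp A (C.p A) h1).symm (C.tmSub (C.v A) h1)) = h1 :=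
    C.pair_eta A h1 _ (castT_heq _ _)
  have e2 : C.pair A (C.comp (C.p A) h2)
      (castT (C.tySub_comp A (C.p A) h2).symm (C.tmSub (C.v A) h2)) = h2 :=
    C.pair_eta A h2 _ (castT_heq _ _)
  rw [← e1, ← e2]
  exact pair_congr A e (((castT_heq _ _).trans ht).trans (castT_heq _ _).symm)

theorem q_sec {Γ Δ : C.Ob} (g : C.Hom Δ Γ) (S : C.Ty Γ) (N : C.Tm Δ (C.tySub S g)) :
    C.comp (C.q g S) (C.sec N) = C.pair S g N := by
  apply hom_ext
  · rw [← C.assoc, p_q, C.assoc, p_sec, C.comp_id, C.p_pair]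
  · have h1 : HEq (C.tmSub (C.v S) (C.comp (C.q g S) (C.sec N)))
        (C.tmSub (C.tmSub (C.v S) (C.q g S)) (C.sec N)) := C.tmSub_comp _ _ _
    have h2 : HEq (C.tmSub (C.v S) (C.q g S)) (C.v (C.tySub S g)) :=
      (C.v_pair _ _ _).trans (cast_heq _ _)
    have e2 : C.tySub (C.tySub S (C.p S)) (C.q g S)
        = C.tySub (C.tySub S g) (C.p (C.tySub S g)) := by
      rw [← C.tySub_comp, p_q, C.tySub_comp]
    have h3 : HEq (C.tmSub (C.tmSub (C.v S) (C.q g S)) (C.sec N))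
        (C.tmSub (C.v (C.tySub S g)) (C.sec N)) := tmSub_congr e2 h2 rfl
    have h4 : HEq (C.tmSub (C.v (C.tySub S g)) (C.sec N)) N :=
      (C.v_pair _ _ _).trans (cast_heq _ _)
    have h5 : HEq (C.tmSub (C.v S) (C.pair S g N)) N := C.v_pair _ _ _
    exact (((h1.trans h3).trans h4)).trans h5.symm

end CwF
section Main
open CwF

variable (C : CwF)

theorem pat_refl {Γ} (A : C.Ty Γ) : C.le A A := ⟨C.v A⟩

theorem pat_trans {Γ} (A B D : C.Ty Γ) (h1 : C.le A B) (h2 : C.le B D) : C.le A D := by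
  obtain ⟨t⟩ := h1; obtain ⟨u⟩ := h2
  refine ⟨castT ?_ (C.tmSub u (C.pair B (C.p A) t))⟩
  rw [← C.tySub_comp, C.p_pair]

theorem pat_top (O : N1Support C) {Γ} (A : C.Ty Γ) : C.le A (O.N1 Γ) :=
  ⟨castT (O.N1_sub _).symm (O.star _)⟩

theorem pat_bot (Z : N0Support C) {Γ} (A : C.Ty Γ) : C.le (Z.N0 Γ) A := by
  refine ⟨castT ?_ (Z.elim
    (C.tySub (C.tySub A (C.p (Z.N0 Γ))) (C.p (Z.N0 (C.ext Γ (Z.N0 Γ)))))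
    (castT (Z.N0_sub _) (C.v (Z.N0 Γ))))⟩
  rw [← C.tySub_comp, p_sec, C.tySub_id]

theorem pat_sub_mono {Γ Δ} (f : C.Hom Δ Γ) (A B : C.Ty Γ) (h : C.le A B) :
    C.le (C.tySub A f) (C.tySub B f) := by
  obtain ⟨t⟩ := h
  refine ⟨castT ?_ (C.tmSub t (C.q f A))⟩
  rw [← C.tySub_comp, ← C.tySub_comp, p_q]

theorem pat_prod_sub (Sg : SigmaSupport C) {Γ Δ} (f : C.Hom Δ Γ) (A B : C.Ty Γ) :
    C.tySub (Sg.prod A B) f = Sg.prod (C.tySub A f) (C.tySub B f) := by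
  unfold SigmaSupport.prod
  rw [Sg.Sg_sub, ← C.tySub_comp, p_q, C.tySub_comp]

theorem pat_arrow_sub (Pi : PiSupport C) {Γ Δ} (f : C.Hom Δ Γ) (A B : C.Ty Γ) :
    C.tySub (Pi.arrow A B) f = Pi.arrow (C.tySub A f) (C.tySub B f) := by
  unfold PiSupport.arrow
  rw [Pi.Pi_sub, ← C.tySub_comp, p_q, C.tySub_comp]

theorem pat_meet (Sg : SigmaSupport C) {Γ} (A B D : C.Ty Γ) :
    C.le D (Sg.prod A B) ↔ C.le D A ∧ C.le D B := by
  have eB : C.tySub (C.tySub B (C.p A)) (C.q (C.p D) A)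
      = C.tySub (C.tySub B (C.p D)) (C.p (C.tySub A (C.p D))) := by
    rw [← C.tySub_comp, p_q, C.tySub_comp]
  constructor
  · rintro ⟨t⟩
    have t' : C.Tm (C.ext Γ D)
        (Sg.Sg (C.tySub A (C.p D)) (C.tySub (C.tySub B (C.p A)) (C.q (C.p D) A))) :=
      castT (Sg.Sg_sub A (C.tySub B (C.p A)) (C.p D)) t
    constructor
    · refine ⟨castT ?_ (Sg.elim
        (C.tySub (C.tySub A (C.p D)) (C.p _)) t'
        (castT ?_ (C.tmSub (C.v (C.tySub A (C.p D)))
          (C.p (C.tySub (C.tySub B (C.p A)) (C.q (C.p D) A))))))⟩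
      · rw [← C.tySub_comp, p_sec, C.tySub_id]
      · conv_rhs => rw [← C.tySub_comp, Sg.p_pairMor, C.tySub_comp]
    · refine ⟨castT ?_ (Sg.elim
        (C.tySub (C.tySub B (C.p D)) (C.p _)) t'
        (castT ?_ (C.v (C.tySub (C.tySub B (C.p A)) (C.q (C.p D) A)))))⟩
      · rw [← C.tySub_comp, p_sec, C.tySub_id]
      · conv_rhs => rw [← C.tySub_comp, Sg.p_pairMor, C.tySub_comp]
        rw [eB]
  · rintro ⟨⟨a⟩, ⟨b⟩⟩
    refine ⟨castT (Sg.Sg_sub A (C.tySub B (C.p A)) (C.p D)).symm (Sg.pr a (castT ?_ b))⟩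
    rw [eB, ← C.tySub_comp, p_sec, C.tySub_id]

theorem pat_join (Pl : PlusSupport C) {Γ} (A B D : C.Ty Γ) :
    C.le (Pl.plus A B) D ↔ C.le A D ∧ C.le B D := by
  constructor
  · rintro ⟨t⟩
    constructor
    · refine ⟨castT ?_ (C.tmSub t (C.pair (Pl.plus A B) (C.p A)
        (castT (Pl.plus_sub A B (C.p A)).symm (Pl.inl (B := C.tySub B (C.p A)) (C.v A)))))⟩
      rw [← C.tySub_comp, C.p_pair]
    · refine ⟨castT ?_ (C.tmSub t (C.pair (Pl.plus A B) (C.p B)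
        (castT (Pl.plus_sub A B (C.p B)).symm (Pl.inr (A := C.tySub A (C.p B)) (C.v B)))))⟩
      rw [← C.tySub_comp, C.p_pair]
  · rintro ⟨⟨k1⟩, ⟨k2⟩⟩
    set pp := C.p (Pl.plus A B)
    set A' := C.tySub A pp
    set B' := C.tySub B pp
    have P : C.Tm (C.ext Γ (Pl.plus A B)) (Pl.plus A' B') :=
      castT (Pl.plus_sub A B pp) (C.v (Pl.plus A B))
    refine ⟨castT ?_ (Pl.elim (C.tySub (C.tySub D pp) (C.p (Pl.plus A' B'))) P
      (castT ?_ (C.tmSub k1 (C.q pp A))) (castT ?_ (C.tmSub k2 (C.q pp B))))⟩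
    · rw [← C.tySub_comp, p_sec, C.tySub_id]
    · rw [← C.tySub_comp, p_q, ← C.tySub_comp, C.p_pair, C.tySub_comp]
    · rw [← C.tySub_comp, p_q, ← C.tySub_comp, C.p_pair, C.tySub_comp]

theorem pat_piAdj (Pi : PiSupport C) (Γ : C.Ob) (S Q : C.Ty Γ) (R : C.Ty (C.ext Γ S)) :
    C.le Q (Pi.Pi S R) ↔ C.le (C.tySub Q (C.p S)) R := by
  set pQ' := C.p (C.tySub Q (C.p S))
  set g := C.comp (C.p S) pQ' with hg
  constructor
  · rintro ⟨t⟩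
    have t0 : C.Tm (C.ext (C.ext Γ S) (C.tySub Q (C.p S)))
        (Pi.Pi (C.tySub S g) (C.tySub R (C.q g S))) := by
      refine castT ?_ (C.tmSub t (C.q (C.p S) Q))
      rw [← C.tySub_comp, p_q, Pi.Pi_sub]
    refine ⟨castT ?_ (Pi.app t0
      (castT (C.tySub_comp S (C.p S) pQ').symm (C.tmSub (C.v S) pQ')))⟩
    rw [← C.tySub_comp, (q_sec g S _).trans (C.pair_eta S pQ' _ (castT_heq _ _))]
  · rintro ⟨u⟩
    have w : C.Tm (C.ext (C.ext Γ Q) (C.tySub S (C.p Q)))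
        (C.tySub (C.tySub Q (C.p S)) (C.q (C.p Q) S)) := by
      refine castT ?_ (C.tmSub (C.v Q) (C.p (C.tySub S (C.p Q))))
      rw [← C.tySub_comp, ← C.tySub_comp, p_q]
    refine ⟨castT (Pi.Pi_sub S R (C.p Q)).symm (Pi.lam (castT ?_
      (C.tmSub u (C.pair (C.tySub Q (C.p S)) (C.q (C.p Q) S) w))))⟩
    rw [← C.tySub_comp, C.p_pair]

theorem pat_sgAdj (Sg : SigmaSupport C) (Γ : C.Ob) (S Q : C.Ty Γ) (R : C.Ty (C.ext Γ S)) :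
    C.le (Sg.Sg S R) Q ↔ C.le R (C.tySub Q (C.p S)) := by
  set pS' := C.p (Sg.Sg S R)
  constructor
  · rintro ⟨t⟩
    refine ⟨castT ?_ (C.tmSub t (Sg.pairMor S R))⟩
    rw [← C.tySub_comp, Sg.p_pairMor, C.tySub_comp]
  · rintro ⟨u⟩
    set S' := C.tySub S pS'
    set R' := C.tySub R (C.q pS' S)
    have P : C.Tm (C.ext Γ (Sg.Sg S R)) (Sg.Sg S' R') :=
      castT (Sg.Sg_sub S R pS') (C.v (Sg.Sg S R))
    have eK : C.tySub (C.tySub (C.tySub Q (C.p S)) (C.p R)) (C.q (C.q pS' S) R)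
        = C.tySub (C.tySub (C.tySub Q pS') (C.p (Sg.Sg S' R'))) (Sg.pairMor S' R') := by
      rw [← C.tySub_comp, ← C.tySub_comp, p_q, ← C.assoc, p_q,
        ← C.tySub_comp, ← C.tySub_comp, Sg.p_pairMor, C.assoc]
    refine ⟨castT ?_ (Sg.elim (C.tySub (C.tySub Q pS') (C.p (Sg.Sg S' R'))) P
      (castT eK (C.tmSub u (C.q (C.q pS' S) R))))⟩
    rw [← C.tySub_comp, p_sec, C.tySub_id]

theorem pat_piMono (Pi : PiSupport C) (Γ : C.Ob) (S : C.Ty Γ) (R R' : C.Ty (C.ext Γ S))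
    (h : C.le R R') : C.le (Pi.Pi S R) (Pi.Pi S R') := by
  refine (pat_piAdj C Pi Γ S _ R').mpr ?_
  exact pat_trans C _ R R' ((pat_piAdj C Pi Γ S _ R).mp (pat_refl C _)) h

theorem pat_sgMono (Sg : SigmaSupport C) (Γ : C.Ob) (S : C.Ty Γ) (R R' : C.Ty (C.ext Γ S))
    (h : C.le R R') : C.le (Sg.Sg S R) (Sg.Sg S R') := by
  refine (pat_sgAdj C Sg Γ S _ R).mpr ?_
  exact pat_trans C R R' _ h ((pat_sgAdj C Sg Γ S _ R').mp (pat_refl C _))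

theorem pat_heyting (Sg : SigmaSupport C) (Pi : PiSupport C) {Γ} (A B D : C.Ty Γ) :
    C.le D (Pi.arrow A B) ↔ C.le (Sg.prod D A) B := by
  unfold SigmaSupport.prod
  constructor
  · rintro ⟨t⟩
    set pX := C.p (Sg.Sg D (C.tySub A (C.p D))) with hpX
    set S' := C.tySub D pX with hS'
    set A2 := C.tySub (C.tySub A (C.p D)) (C.q pX D) with hA2
    set g := C.comp (C.p D) (C.p (C.tySub A (C.p D))) with hg
    -- a term in Γ.D.A of type B{g}
    have t0 : C.Tm (C.ext (C.ext Γ D) (C.tySub A (C.p D)))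
        (Pi.Pi (C.tySub A g) (C.tySub (C.tySub B (C.p A)) (C.q g A))) := by
      refine castT ?_ (C.tmSub t (C.p (C.tySub A (C.p D))))
      unfold PiSupport.arrow
      rw [← C.tySub_comp, ← hg, Pi.Pi_sub]
    have N : C.Tm (C.ext (C.ext Γ D) (C.tySub A (C.p D))) (C.tySub A g) :=
      castT (C.tySub_comp A (C.p D) (C.p (C.tySub A (C.p D)))).symm
        (C.v (C.tySub A (C.p D)))
    have b0 : C.Tm (C.ext (C.ext Γ D) (C.tySub A (C.p D))) (C.tySub B g) := by
      refine castT ?_ (Pi.app t0 N)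
      conv_lhs => rw [← C.tySub_comp, q_sec, ← C.tySub_comp, C.p_pair]
    have hcomp : C.comp g (C.q (C.q pX D) (C.tySub A (C.p D)))
        = C.comp pX (C.comp (C.p S') (C.p A2)) := by
      rw [hg, C.assoc, p_q, ← C.assoc, p_q, C.assoc]
    have eK : C.tySub (C.tySub B g) (C.q (C.q pX D) (C.tySub A (C.p D)))
        = C.tySub (C.tySub (C.tySub B pX) (C.p (Sg.Sg S' A2))) (Sg.pairMor S' A2) := by
      conv_rhs => rw [← C.tySub_comp, Sg.p_pairMor, ← C.tySub_comp]
      conv_lhs => rw [← C.tySub_comp, hcomp]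
    refine ⟨castT ?_ (Sg.elim (C.tySub (C.tySub B pX) (C.p (Sg.Sg S' A2)))
      (castT (Sg.Sg_sub D (C.tySub A (C.p D)) pX) (C.v (Sg.Sg D (C.tySub A (C.p D)))))
      (castT eK (C.tmSub b0 (C.q (C.q pX D) (C.tySub A (C.p D))))))⟩
    rw [← C.tySub_comp, p_sec, C.tySub_id]
  · rintro ⟨u⟩
    have body : C.Tm (C.ext (C.ext Γ D) (C.tySub A (C.p D)))
        (C.tySub (C.tySub B (C.p A)) (C.q (C.p D) A)) := by
      refine castT ?_ (C.tmSub u (Sg.pairMor D (C.tySub A (C.p D))))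
      rw [← C.tySub_comp, Sg.p_pairMor, ← C.tySub_comp, p_q]
    exact ⟨castT (Pi.Pi_sub A (C.tySub B (C.p A)) (C.p D)).symm (Pi.lam body)⟩

end Main
/-- If a cwf supports Σ, Π, +, N₀ and N₁ then the propositions-as-types assignment
Pr(Γ) = (Ty(Γ), ≤) with A ≤ B iff Tm(Γ.A, B{p(A)}) inhabited, ⊤ = N₁, ⊥ = N₀,
∧ = ×, ∨ = +, → = function type, ∀_S = Π(S,−), ∃_S = Σ(S,−), makes (C, Pr)
a cwf with first-order hyperdoctrine: each Pr(Γ) is a Heyting prealgebra,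
substitution is a Heyting morphism functorially, the quantifiers are monotone and
adjoint to weakening, and the Beck–Chevalley conditions hold. -/
theorem propositions_as_types_hyperdoctrine (C : CwF)
    (Sg : SigmaSupport C) (Pi : PiSupport C) (Pl : PlusSupport C)
    (Z : N0Support C) (O : N1Support C) :
    -- Pr(Γ) is a preorder
    (∀ (Γ : C.Ob) (A : C.Ty Γ), C.le A A) ∧
    (∀ (Γ : C.Ob) (A B D : C.Ty Γ), C.le A B → C.le B D → C.le A D) ∧
    -- top and bottom
    (∀ (Γ : C.Ob) (A : C.Ty Γ), C.le A (O.N1 Γ)) ∧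
    (∀ (Γ : C.Ob) (A : C.Ty Γ), C.le (Z.N0 Γ) A) ∧
    -- meets, joins, Heyting implication
    (∀ (Γ : C.Ob) (A B D : C.Ty Γ), C.le D (Sg.prod A B) ↔ C.le D A ∧ C.le D B) ∧
    (∀ (Γ : C.Ob) (A B D : C.Ty Γ), C.le (Pl.plus A B) D ↔ C.le A D ∧ C.le B D) ∧
    (∀ (Γ : C.Ob) (A B D : C.Ty Γ), C.le D (Pi.arrow A B) ↔ C.le (Sg.prod D A) B) ∧
    -- substitution is a monotone Heyting morphism, functorially
    (∀ {Γ Δ : C.Ob} (f : C.Hom Δ Γ) (A B : C.Ty Γ),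
      C.le A B → C.le (C.tySub A f) (C.tySub B f)) ∧
    (∀ {Γ Δ : C.Ob} (f : C.Hom Δ Γ), C.tySub (O.N1 Γ) f = O.N1 Δ) ∧
    (∀ {Γ Δ : C.Ob} (f : C.Hom Δ Γ), C.tySub (Z.N0 Γ) f = Z.N0 Δ) ∧
    (∀ {Γ Δ : C.Ob} (f : C.Hom Δ Γ) (A B : C.Ty Γ),
      C.tySub (Sg.prod A B) f = Sg.prod (C.tySub A f) (C.tySub B f)) ∧
    (∀ {Γ Δ : C.Ob} (f : C.Hom Δ Γ) (A B : C.Ty Γ),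
      C.tySub (Pl.plus A B) f = Pl.plus (C.tySub A f) (C.tySub B f)) ∧
    (∀ {Γ Δ : C.Ob} (f : C.Hom Δ Γ) (A B : C.Ty Γ),
      C.tySub (Pi.arrow A B) f = Pi.arrow (C.tySub A f) (C.tySub B f)) ∧
    (∀ (Γ : C.Ob) (A : C.Ty Γ), C.tySub A (C.id Γ) = A) ∧
    (∀ {Γ Δ Θ : C.Ob} (A : C.Ty Γ) (f : C.Hom Δ Γ) (g : C.Hom Θ Δ),
      C.tySub A (C.comp f g) = C.tySub (C.tySub A f) g) ∧
    -- quantifiers are monotone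
    (∀ (Γ : C.Ob) (S : C.Ty Γ) (R R' : C.Ty (C.ext Γ S)),
      C.le R R' → C.le (Pi.Pi S R) (Pi.Pi S R')) ∧
    (∀ (Γ : C.Ob) (S : C.Ty Γ) (R R' : C.Ty (C.ext Γ S)),
      C.le R R' → C.le (Sg.Sg S R) (Sg.Sg S R')) ∧
    -- adjunctions with weakening
    (∀ (Γ : C.Ob) (S Q : C.Ty Γ) (R : C.Ty (C.ext Γ S)),
      C.le Q (Pi.Pi S R) ↔ C.le (C.tySub Q (C.p S)) R) ∧
    (∀ (Γ : C.Ob) (S Q : C.Ty Γ) (R : C.Ty (C.ext Γ S)),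
      C.le (Sg.Sg S R) Q ↔ C.le R (C.tySub Q (C.p S))) ∧
    -- Beck–Chevalley
    (∀ {Γ Δ : C.Ob} (f : C.Hom Δ Γ) (S : C.Ty Γ) (R : C.Ty (C.ext Γ S)),
      C.tySub (Pi.Pi S R) f = Pi.Pi (C.tySub S f) (C.tySub R (C.q f S))) ∧
    (∀ {Γ Δ : C.Ob} (f : C.Hom Δ Γ) (S : C.Ty Γ) (R : C.Ty (C.ext Γ S)),
      C.tySub (Sg.Sg S R) f = Sg.Sg (C.tySub S f) (C.tySub R (C.q f S))) := by
  refine ⟨fun Γ A => pat_refl C A, fun Γ A B D => pat_trans C A B D,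
    fun Γ A => pat_top C O A, fun Γ A => pat_bot C Z A,
    fun Γ A B D => pat_meet C Sg A B D, fun Γ A B D => pat_join C Pl A B D,
    fun Γ A B D => pat_heyting C Sg Pi A B D,
    fun {Γ Δ} f A B h => pat_sub_mono C f A B h,
    fun {Γ Δ} f => O.N1_sub f, fun {Γ Δ} f => Z.N0_sub f,
    fun {Γ Δ} f A B => pat_prod_sub C Sg f A B,
    fun {Γ Δ} f A B => Pl.plus_sub A B f,
    fun {Γ Δ} f A B => pat_arrow_sub C Pi f A B,
    fun Γ A => C.tySub_id A,
    fun {Γ Δ Θ} A f g => C.tySub_comp A f g,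
    fun Γ S R R' h => pat_piMono C Pi Γ S R R' h,
    fun Γ S R R' h => pat_sgMono C Sg Γ S R R' h,
    fun Γ S Q R => pat_piAdj C Pi Γ S Q R,
    fun Γ S Q R => pat_sgAdj C Sg Γ S Q R,
    fun {Γ Δ} f S R => Pi.Pi_sub S R f,
    fun {Γ Δ} f S R => Sg.Sg_sub S R f⟩
end
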